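/- arXiv:1803.11191 — 2 statements merged into one kernel-verified Lean document; each statement's English description precedes it below -/
import Mathlib

section
/- For nonnegative integers i, j, i', j' with i + j = i' + j', define a_{i'j'}^{ij} = 2^{−(i'+j')/2} i! j! Σ_{s=max(0,i'−j)}^{min(i',i)} (−1)^{j'−i+s} / (s!(i−s)!(i'−s)!(j'−i+s)!). Then for all x, y ∈ ℝ the one-dimensional Hermite polynomials satisfy He_i(h + g/2) He_j(h − g/2) = Σ_{i'+j' = i+j} a_{i'j'}^{ij} He_{i'}(√2 h) He_{j'}(g/√2). -/
/-!
Write `G x = exp (-x²/2)`, so that `He n x = (-1)ⁿ exp (x²/2) G⁽ⁿ⁾(x)`. With `u = √2 h` and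
`v = g/√2`, the points `h ± g/2` are the rotated coordinates `x = (u + v)/√2`, `y = (u - v)/√2`,
and `G x * G y = G u * G v` because `x² + y² = u² + v²`. Differentiating `G⁽ⁱ⁾(x) G⁽ʲ⁾(y)` along
the direction in which only `x` (resp. only `y`) moves raises `i` (resp. `j`) by one, while on
the `(u, v)` side the same directional derivative multiplies the symbol of an operator
`∑ₖ Pₖ ∂ᵤᵏ ∂ᵥⁿ⁻ᵏ` by `(X + 1)/√2` (resp. `(X - 1)/√2`). Hence `G⁽ⁱ⁾(x) G⁽ʲ⁾(y)` is the operator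
with symbol `2^(-(i+j)/2) (X + 1)ⁱ (X - 1)ʲ` applied to `G u * G v`, and the coefficients of
this polynomial are the `a_{i'j'}^{ij}`.
-/

open Real

/-- One-dimensional probabilists' Hermite polynomial. -/
noncomputable def He (n : ℕ) (x : ℝ) : ℝ :=
  (-1:ℝ)^n * Real.exp (x^2/2) * iteratedDeriv n (fun y => Real.exp (-(y^2)/2)) x

/-- Three-dimensional Hermite polynomial (product of 1D ones). -/
noncomputable def hermite3 (k₁ k₂ k₃ : ℕ) (v : EuclideanSpace ℝ (Fin 3)) : ℝ :=
  He k₁ (v 0) * He k₂ (v 1) * He k₃ (v 2)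

/-- The splitting coefficient `a_{i'j'}^{ij}`. -/
noncomputable def acoef (i j i' j' : ℕ) : ℝ :=
  (2:ℝ) ^ (-((i' + j' : ℕ) : ℝ) / 2) * (Nat.factorial i) * (Nat.factorial j) *
    ∑ s ∈ Finset.Icc (i' - j) (min i' i),
      (-1:ℝ)^(j' + i + s) /
        ((Nat.factorial s) * (Nat.factorial (i - s)) * (Nat.factorial (i' - s)) *
          (Nat.factorial (j' + s - i)))

open Polynomial Finset
open scoped ContDiff Nat

section HomogeneousDerivSum

/-- The degree-`n` operator `∑ₖ Pₖ ∂ᵤᵏ ∂ᵥⁿ⁻ᵏ` with symbol `P`, applied to `f u * f v`. -/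
noncomputable def homogeneousDerivSum (f : ℝ → ℝ) (n : ℕ) (P : ℝ[X]) (u v : ℝ) : ℝ :=
  ∑ k ∈ range (n + 1), P.coeff k * iteratedDeriv k f u * iteratedDeriv (n - k) f v

variable {f : ℝ → ℝ}

lemma homogeneousDerivSum_add (n : ℕ) (P Q : ℝ[X]) (u v : ℝ) :
    homogeneousDerivSum f n (P + Q) u v
      = homogeneousDerivSum f n P u v + homogeneousDerivSum f n Q u v := by
  simp only [homogeneousDerivSum, coeff_add, add_mul, sum_add_distrib]

lemma homogeneousDerivSum_C_mul (n : ℕ) (a : ℝ) (P : ℝ[X]) (u v : ℝ) :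
    homogeneousDerivSum f n (C a * P) u v = a * homogeneousDerivSum f n P u v := by
  simp only [homogeneousDerivSum, coeff_C_mul, mul_sum, mul_assoc]

lemma homogeneousDerivSum_X_mul (n : ℕ) (P : ℝ[X]) (u v : ℝ) :
    homogeneousDerivSum f (n + 1) (X * P) u v
      = ∑ k ∈ range (n + 1), P.coeff k * iteratedDeriv (k + 1) f u * iteratedDeriv (n - k) f v := by
  simp [homogeneousDerivSum, sum_range_succ' _ (n + 1), coeff_X_mul]

lemma homogeneousDerivSum_succ {n : ℕ} {P : ℝ[X]} (hP : P.natDegree ≤ n) (u v : ℝ) :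
    homogeneousDerivSum f (n + 1) P u v
      = ∑ k ∈ range (n + 1), P.coeff k * iteratedDeriv k f u * iteratedDeriv (n - k + 1) f v := by
  rw [homogeneousDerivSum, sum_range_succ, coeff_eq_zero_of_natDegree_lt (by omega),
    zero_mul, zero_mul, add_zero]
  refine sum_congr rfl fun k hk => ?_
  rw [Nat.sub_add_comm (Nat.lt_succ_iff.mp (mem_range.mp hk))]

lemma hasDerivAt_iteratedDeriv_add_mul (hf : ContDiff ℝ ∞ f) (k : ℕ) (x c : ℝ) :
    HasDerivAt (fun t => iteratedDeriv k f (x + c * t)) (c * iteratedDeriv (k + 1) f x) 0 := by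
  have hk : HasDerivAt (iteratedDeriv k f) (iteratedDeriv (k + 1) f x) x := by
    rw [iteratedDeriv_succ]
    exact ((hf.differentiable_iteratedDeriv k
      (by exact_mod_cast ENat.natCast_lt_top k)).differentiableAt).hasDerivAt
  rw [mul_comm]
  exact hk.comp_of_eq 0 (by simpa using ((hasDerivAt_id 0).const_mul c).const_add x) (by simp)

theorem hasDerivAt_homogeneousDerivSum (hf : ContDiff ℝ ∞ f) {n : ℕ} {P : ℝ[X]}
    (hP : P.natDegree ≤ n) (a b u v : ℝ) :
    HasDerivAt (fun t => homogeneousDerivSum f n P (u + a * t) (v + b * t))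
      (homogeneousDerivSum f (n + 1) ((C a * X + C b) * P) u v) 0 := by
  rw [add_mul, homogeneousDerivSum_add, mul_assoc, homogeneousDerivSum_C_mul,
    homogeneousDerivSum_C_mul, homogeneousDerivSum_X_mul, homogeneousDerivSum_succ hP,
    mul_sum, mul_sum, ← sum_add_distrib]
  refine HasDerivAt.fun_sum fun k _ => ?_
  refine (((hasDerivAt_iteratedDeriv_add_mul hf k u a).const_mul (P.coeff k)).fun_mul
    (hasDerivAt_iteratedDeriv_add_mul hf (n - k) v b)).congr_deriv ?_
  simp only [mul_zero, add_zero]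
  ring

theorem eq_homogeneousDerivSum_of_hasDerivAt (hf : ContDiff ℝ ∞ f) {n : ℕ} {P : ℝ[X]}
    (hP : P.natDegree ≤ n) {a b : ℝ} {F F' : ℝ → ℝ → ℝ}
    (hF : ∀ u v, F u v = homogeneousDerivSum f n P u v)
    (hF' : ∀ u v, HasDerivAt (fun t => F (u + a * t) (v + b * t)) (F' u v) 0) (u v : ℝ) :
    F' u v = homogeneousDerivSum f (n + 1) ((C a * X + C b) * P) u v :=
  (hF' u v).unique (by simpa only [hF] using hasDerivAt_homogeneousDerivSum hf hP a b u v)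

end HomogeneousDerivSum

noncomputable def gaussian (x : ℝ) : ℝ := Real.exp (-(x ^ 2) / 2)

lemma contDiff_gaussian : ContDiff ℝ ∞ gaussian :=
  Real.contDiff_exp.comp ((contDiff_id.pow 2).neg.div_const 2)

section Rotation

variable {c s : ℝ}

lemma rotate_sq_add_sq (hcs : c ^ 2 + s ^ 2 = 1) (u v : ℝ) :
    (c * u + s * v) ^ 2 + (s * u - c * v) ^ 2 = u ^ 2 + v ^ 2 := by
  linear_combination (u ^ 2 + v ^ 2) * hcs

lemma gaussian_mul_gaussian_rotate (hcs : c ^ 2 + s ^ 2 = 1) (u v : ℝ) :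
    gaussian (c * u + s * v) * gaussian (s * u - c * v) = gaussian u * gaussian v := by
  simp only [gaussian, ← Real.exp_add]
  congr 1
  linear_combination (-1 / 2 : ℝ) * rotate_sq_add_sq hcs u v

lemma hasDerivAt_rotate_fst {f : ℝ → ℝ} (hf : ContDiff ℝ ∞ f) (hcs : c ^ 2 + s ^ 2 = 1)
    (i j : ℕ) (u v : ℝ) :
    HasDerivAt (fun t => iteratedDeriv i f (c * (u + c * t) + s * (v + s * t))
        * iteratedDeriv j f (s * (u + c * t) - c * (v + s * t)))
      (iteratedDeriv (i + 1) f (c * u + s * v) * iteratedDeriv j f (s * u - c * v)) 0 := by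
  have hx (t : ℝ) : c * (u + c * t) + s * (v + s * t) = c * u + s * v + 1 * t := by
    linear_combination t * hcs
  have hy (t : ℝ) : s * (u + c * t) - c * (v + s * t) = s * u - c * v := by ring
  simp only [hx, hy]
  simpa using
    (hasDerivAt_iteratedDeriv_add_mul hf i _ 1).mul_const (iteratedDeriv j f (s * u - c * v))

lemma hasDerivAt_rotate_snd {f : ℝ → ℝ} (hf : ContDiff ℝ ∞ f) (hcs : c ^ 2 + s ^ 2 = 1)
    (i j : ℕ) (u v : ℝ) :
    HasDerivAt (fun t => iteratedDeriv i f (c * (u + s * t) + s * (v + -c * t))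
        * iteratedDeriv j f (s * (u + s * t) - c * (v + -c * t)))
      (iteratedDeriv i f (c * u + s * v) * iteratedDeriv (j + 1) f (s * u - c * v)) 0 := by
  have hx (t : ℝ) : c * (u + s * t) + s * (v + -c * t) = c * u + s * v := by ring
  have hy (t : ℝ) : s * (u + s * t) - c * (v + -c * t) = s * u - c * v + 1 * t := by
    linear_combination t * hcs
  simp only [hx, hy]
  simpa using
    (hasDerivAt_iteratedDeriv_add_mul hf j _ 1).const_mul (iteratedDeriv i f (c * u + s * v))

lemma natDegree_linear_pow_mul_linear_pow_le (i j : ℕ) :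
    ((C c * X + C s) ^ i * (C s * X - C c) ^ j).natDegree ≤ i + j := by
  compute_degree

theorem iteratedDeriv_gaussian_mul_rotate (hcs : c ^ 2 + s ^ 2 = 1) (i j : ℕ) (u v : ℝ) :
    iteratedDeriv i gaussian (c * u + s * v) * iteratedDeriv j gaussian (s * u - c * v)
      = homogeneousDerivSum gaussian (i + j) ((C c * X + C s) ^ i * (C s * X - C c) ^ j) u v := by
  induction i generalizing u v with
  | zero =>
    induction j generalizing u v with
    | zero =>
      simpa [homogeneousDerivSum] using gaussian_mul_gaussian_rotate hcs u v
    | succ j ih =>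
      rw [eq_homogeneousDerivSum_of_hasDerivAt contDiff_gaussian
        (natDegree_linear_pow_mul_linear_pow_le 0 j) ih
        (hasDerivAt_rotate_snd contDiff_gaussian hcs 0 j) u v]
      congr 1
      rw [C_neg, ← sub_eq_add_neg]
      ring
  | succ i ih =>
    rw [eq_homogeneousDerivSum_of_hasDerivAt contDiff_gaussian
      (natDegree_linear_pow_mul_linear_pow_le i j) ih
      (hasDerivAt_rotate_fst contDiff_gaussian hcs i j) u v, Nat.succ_add, pow_succ', mul_assoc]

end Rotation

lemma He_mul_He (a b : ℕ) (x y : ℝ) :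
    He a x * He b y = (-1) ^ (a + b) * (Real.exp (x ^ 2 / 2) * Real.exp (y ^ 2 / 2))
      * (iteratedDeriv a gaussian x * iteratedDeriv b gaussian y) := by
  rw [He, He, pow_add]
  unfold gaussian
  ring

lemma sum_coeff_mul_He_mul_He (n : ℕ) (P : ℝ[X]) (u v : ℝ) :
    ∑ t ∈ range (n + 1), P.coeff t * He t u * He (n - t) v
      = (-1) ^ n * (Real.exp (u ^ 2 / 2) * Real.exp (v ^ 2 / 2))
        * homogeneousDerivSum gaussian n P u v := by
  rw [homogeneousDerivSum, mul_sum]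
  refine sum_congr rfl fun t ht => ?_
  rw [mul_assoc, He_mul_He, Nat.add_sub_cancel' (Nat.lt_succ_iff.mp (mem_range.mp ht))]
  ring

lemma C_mul_X_add_C_pow_mul_C_mul_X_sub_C_pow {R : Type*} [CommRing R] (a : R) (i j : ℕ) :
    (C a * X + C a) ^ i * (C a * X - C a) ^ j = C (a ^ (i + j)) * ((X + 1) ^ i * (X - 1) ^ j) := by
  rw [← mul_add_one, ← mul_sub_one, mul_pow, mul_pow, C_pow, pow_add]
  ring

lemma coeff_X_add_one_pow_mul_X_sub_one_pow {R : Type*} [CommRing R] (i j t : ℕ) :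
    ((X + 1) ^ i * (X - 1) ^ j : R[X]).coeff t
      = ∑ s ∈ range (t + 1), (i.choose s : R) * j.choose (t - s) * (-1) ^ (j - (t - s)) := by
  have hX : (X - 1 : R[X]) = X + C (-1) := by rw [C_neg, C_1, sub_eq_add_neg]
  rw [coeff_mul, Nat.sum_antidiagonal_eq_sum_range_succ_mk]
  refine sum_congr rfl fun s _ => ?_
  rw [coeff_X_add_one_pow, hX, coeff_X_add_C_pow]
  ring

lemma acoef_eq_coeff {i j t : ℕ} (ht : t ≤ i + j) :
    acoef i j t (i + j - t) = (√2 ^ (i + j))⁻¹ * ((X + 1) ^ i * (X - 1) ^ j : ℝ[X]).coeff t := by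
  have hterm : ∀ s ∈ Icc (t - j) (min t i),
      (i ! * j ! : ℝ) * ((-1) ^ (i + j - t + i + s)
        / (s ! * (i - s)! * (t - s)! * (i + j - t + s - i)!))
      = i.choose s * j.choose (t - s) * (-1) ^ (j - (t - s)) := by
    intro s hs
    obtain ⟨hts, hst⟩ := mem_Icc.mp hs
    have hsi : s ≤ i := hst.trans (min_le_right _ _)
    have htsj : t - s ≤ j := by omega
    rw [show i + j - t + s - i = j - (t - s) by omega,
      show i + j - t + i + s = j - (t - s) + 2 * i by omega, pow_add, pow_mul, neg_one_sq, one_pow,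
      Nat.cast_choose ℝ hsi, Nat.cast_choose ℝ htsj]
    field_simp
  have hvanish : ∀ s ∈ range (t + 1), s ∉ Icc (t - j) (min t i) →
      (i.choose s : ℝ) * j.choose (t - s) * (-1) ^ (j - (t - s)) = 0 := by
    intro s hs hsI
    simp only [mem_Icc, mem_range, le_min_iff, not_and_or, not_le] at hs hsI
    rcases lt_or_ge i s with his | hsi
    · simp [Nat.choose_eq_zero_of_lt his]
    · simp [Nat.choose_eq_zero_of_lt (show j < t - s by omega)]
  have hsub : Icc (t - j) (min t i) ⊆ range (t + 1) := fun s hs => by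
    simp only [mem_Icc, mem_range, le_min_iff] at hs ⊢
    omega
  rw [acoef, coeff_X_add_one_pow_mul_X_sub_one_pow, Nat.add_sub_cancel' ht,
    Real.rpow_div_two_eq_sqrt _ zero_le_two, Real.rpow_neg (Real.sqrt_nonneg 2), Real.rpow_natCast,
    mul_assoc, mul_assoc, ← mul_assoc (i ! : ℝ), mul_sum, sum_congr rfl hterm,
    sum_subset hsub hvanish]

theorem hermite_splitting_1d (i j : ℕ) (h g : ℝ) :
    He i (h + g/2) * He j (h - g/2)
      = ∑ t ∈ Finset.range (i + j + 1),
          acoef i j t (i + j - t) * He t (Real.sqrt 2 * h) * He (i + j - t) (g / Real.sqrt 2) := by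
  have hcs : (√2)⁻¹ ^ 2 + (√2)⁻¹ ^ 2 = (1 : ℝ) := by
    rw [inv_pow, Real.sq_sqrt zero_le_two]; norm_num
  have hx : (√2)⁻¹ * (√2 * h) + (√2)⁻¹ * (g / √2) = h + g / 2 := by
    field_simp; rw [Real.sq_sqrt zero_le_two]; ring
  have hy : (√2)⁻¹ * (√2 * h) - (√2)⁻¹ * (g / √2) = h - g / 2 := by
    field_simp; rw [Real.sq_sqrt zero_le_two]; ring
  have hE : Real.exp ((h + g / 2) ^ 2 / 2) * Real.exp ((h - g / 2) ^ 2 / 2)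
      = Real.exp ((√2 * h) ^ 2 / 2) * Real.exp ((g / √2) ^ 2 / 2) := by
    rw [← hx, ← hy, ← Real.exp_add, ← Real.exp_add]
    congr 1
    linear_combination (1 / 2 : ℝ) * rotate_sq_add_sq hcs (√2 * h) (g / √2)
  have hrotate := iteratedDeriv_gaussian_mul_rotate hcs i j (√2 * h) (g / √2)
  rw [hx, hy, C_mul_X_add_C_pow_mul_C_mul_X_sub_C_pow] at hrotate
  calc He i (h + g / 2) * He j (h - g / 2)
      = (-1) ^ (i + j) * (Real.exp ((√2 * h) ^ 2 / 2) * Real.exp ((g / √2) ^ 2 / 2))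
          * homogeneousDerivSum gaussian (i + j)
            (C ((√2)⁻¹ ^ (i + j)) * ((X + 1) ^ i * (X - 1) ^ j)) (√2 * h) (g / √2) := by
        rw [He_mul_He, hE, hrotate]
    _ = _ := by
        rw [← sum_coeff_mul_He_mul_He]
        refine sum_congr rfl fun t ht => ?_
        rw [coeff_C_mul, inv_pow, acoef_eq_coeff (Nat.lt_succ_iff.mp (mem_range.mp ht))]
end

section
/- For α > −1 and μ > −1, ∫_0^∞ L_m^{(α)}(s) L_n^{(α)}(s) s^μ e^{−s} ds = (−1)^{m+n} Γ(μ+1) Σ_{i=0}^{min(m,n)} C(μ−α, m−i) C(μ−α, n−i) C(i+μ, i), where C(x, k) = x(x−1)⋯(x−k+1)/k! is the generalized binomial coefficient. -/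
open Real MeasureTheory

/-- Generalized Laguerre polynomial via the Rodrigues formula. -/
noncomputable def Lag (n : ℕ) (α : ℝ) (x : ℝ) : ℝ :=
  x ^ (-α) * Real.exp x / (Nat.factorial n) *
    iteratedDeriv n (fun y => y ^ ((n : ℝ) + α) * Real.exp (-y)) x

/-- Generalized binomial coefficient `C(x, k) = x(x−1)⋯(x−k+1)/k!`. -/
noncomputable def gbinom (x : ℝ) (k : ℕ) : ℝ :=
  (∏ i ∈ Finset.range k, (x - i)) / (Nat.factorial k)

/-!
Leibniz's rule applied to the Rodrigues formula gives the explicit expansion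
`L_n^{(α)}(x) = ∑_k (-1)^k C(n+α, n-k) x^k / k!`, so the integral is a double sum of
coefficient products times `Γ(μ+j+k+1) = Γ(μ+1) (j+k)! C(μ+j+k, j+k)`. What remains is an
identity valid in any binomial ring: `C(j+k, j) C(μ+j+k, j+k)` splits as
`∑_i C(μ+j, j-i) C(μ+k, k-i) C(i+μ, i)`, after which the sums over `j` and `k` separate and each
collapses, by reflection and Chu–Vandermonde, to `±C(μ-α, m-i)`.
-/

open Finset Polynomial Set
open scoped Nat

theorem Finset.sum_range_sum_range_sum_range_min {M : Type*} [AddCommMonoid M] (m n : ℕ)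
    (f : ℕ → ℕ → ℕ → M) :
    ∑ j ∈ range (m + 1), ∑ k ∈ range (n + 1), ∑ i ∈ range (min j k + 1), f i j k
      = ∑ i ∈ range (min m n + 1), ∑ j ∈ Icc i m, ∑ k ∈ Icc i n, f i j k := by
  calc _ = ∑ j ∈ range (m + 1), ∑ i ∈ range (min j n + 1), ∑ k ∈ Icc i n, f i j k :=
        sum_congr rfl fun j _ => sum_comm' fun k i => by simp only [mem_range, mem_Icc]; omega
    _ = _ := sum_comm' fun j i => by simp only [mem_range, mem_Icc]; omega

namespace Ring

variable {R : Type*} [CommRing R] [BinomialRing R]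

theorem descPochhammer_eval_eq_factorial_mul_choose (r : R) (k : ℕ) :
    (descPochhammer R k).eval r = k ! * choose r k := by
  rw [← nsmul_eq_mul, ← descPochhammer_eq_factorial_smul_choose,
    ← eval₂_smulOneHom_eq_smeval, ← descPochhammer_map (Int.castRingHom R), eval_map,
    Subsingleton.elim (Int.castRingHom R) RingHom.smulOneHom]

theorem ascPochhammer_eval_eq_factorial_mul_choose (r : R) (k : ℕ) :
    (ascPochhammer R k).eval r = k ! * choose (r + k - 1) k := by
  rw [← descPochhammer_eval_eq_factorial_mul_choose, descPochhammer_eval_eq_ascPochhammer]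
  congr 1
  ring

theorem choose_neg_eq_neg_one_pow_mul (r : R) (n : ℕ) :
    choose (-r) n = (-1) ^ n * choose (r + n - 1) n := by
  rw [choose_neg, Units.smul_def, zsmul_eq_mul, Int.coe_negOnePow_natCast]
  norm_cast

theorem choose_sub_mul_choose {r : R} {i k : ℕ} (h : i ≤ k) :
    choose (r + k) (k - i) * choose (i + r) i = k.choose i * choose (r + k) k := by
  have := choose_smul_choose (r + k) (Nat.sub_le k i)
  rw [Nat.sub_sub_self h, Nat.choose_symm h, nsmul_eq_mul] at this
  rw [this, Nat.cast_sub h]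
  congr 2
  ring

-- Each term factors as `C(r+k, k) C(k, i) C(r+j, j-i)`; Chu–Vandermonde sums the last two.
theorem sum_choose_mul_choose_mul_choose_of_le (r : R) {j k : ℕ} (h : j ≤ k) :
    ∑ i ∈ range (j + 1), choose (r + j) (j - i) * choose (r + k) (k - i) * choose (i + r) i
      = (j + k).choose j * choose (r + j + k) (j + k) := by
  have hterm : ∀ i ∈ range (j + 1),
      choose (r + j) (j - i) * choose (r + k) (k - i) * choose (i + r) i
        = choose (r + k) k * (choose (k : R) i * choose (r + j) (j - i)) := by
    intro i hi
    have hik : i ≤ k := by have := mem_range.1 hi; omega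
    rw [mul_assoc, choose_sub_mul_choose hik, choose_natCast]
    ring
  have hvand := add_choose_eq (r := (k : R)) (s := r + j) j (Commute.all _ _)
  rw [Nat.sum_antidiagonal_eq_sum_range_succ fun a b => choose (k : R) a * choose (r + j) b]
    at hvand
  have hsplit := choose_smul_choose (r + j + k) (Nat.le_add_right j k)
  rw [nsmul_eq_mul, Nat.add_sub_cancel_left] at hsplit
  rw [sum_congr rfl hterm, ← mul_sum, ← hvand, hsplit, show (k : R) + (r + j) = r + j + k by ring,
    show r + j + k - j = r + k by ring, mul_comm]

theorem sum_choose_mul_choose_mul_choose (r : R) (j k : ℕ) :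
    ∑ i ∈ range (min j k + 1), choose (r + j) (j - i) * choose (r + k) (k - i) * choose (i + r) i
      = (j + k).choose j * choose (r + j + k) (j + k) := by
  rcases le_total j k with h | h
  · rw [min_eq_left h, sum_choose_mul_choose_mul_choose_of_le r h]
  · rw [min_eq_right h, Nat.choose_symm_add, add_comm j k, add_right_comm r (j : R),
      ← sum_choose_mul_choose_mul_choose_of_le r h]
    exact sum_congr rfl fun i _ => by ring

-- Reflection turns `C(r+j, j-i)` into `±C(-(r+i+1), j-i)`, making the sum a Chu–Vandermonde
-- convolution.
theorem sum_Icc_neg_one_pow_mul_choose_mul_choose (a r : R) {i m : ℕ} (h : i ≤ m) :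
    ∑ j ∈ Icc i m, (-1) ^ j * choose (m + a) (m - j) * choose (r + j) (j - i)
      = (-1) ^ m * choose (r - a) (m - i) := by
  have hterm : ∀ s ∈ range (m + 1 - i),
      (-1) ^ (i + s) * choose (m + a) (m - (i + s)) * choose (r + ↑(i + s)) (i + s - i)
        = (-1) ^ i * (choose (-(r + i + 1)) s * choose (m + a) (m - i - s)) := by
    intro s _
    rw [choose_neg_eq_neg_one_pow_mul, Nat.add_sub_cancel_left, Nat.sub_sub, pow_add,
      show r + i + 1 + s - 1 = r + ((i + s : ℕ) : R) by push_cast; ring]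
    ring
  have hvand := add_choose_eq (r := -(r + i + 1)) (s := m + a) (m - i) (Commute.all _ _)
  rw [Nat.sum_antidiagonal_eq_sum_range_succ
    fun b c => choose (-(r + i + 1)) b * choose (m + a) c] at hvand
  rw [← Finset.Ico_add_one_right_eq_Icc, sum_Ico_eq_sum_range, sum_congr rfl hterm, ← mul_sum,
    Nat.sub_add_comm h, ← hvand,
    show -(r + i + 1) + (m + a) = -(r - a + 1 - ((m - i : ℕ) : R)) by rw [Nat.cast_sub h]; ring,
    choose_neg_eq_neg_one_pow_mul, ← mul_assoc, ← pow_add, Nat.add_sub_cancel' h]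
  congr 2
  ring

theorem sum_sum_neg_one_pow_mul_choose_eq (a r : R) (m n : ℕ) :
    ∑ j ∈ range (m + 1), ∑ k ∈ range (n + 1), (-1) ^ (j + k) * choose (m + a) (m - j) *
        choose (n + a) (n - k) * ((j + k).choose j * choose (r + j + k) (j + k))
      = (-1) ^ (m + n) * ∑ i ∈ range (min m n + 1),
          choose (r - a) (m - i) * choose (r - a) (n - i) * choose (i + r) i := by
  calc _ = ∑ j ∈ range (m + 1), ∑ k ∈ range (n + 1), ∑ i ∈ range (min j k + 1),
        ((-1) ^ j * choose (m + a) (m - j) * choose (r + j) (j - i)) *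
          ((-1) ^ k * choose (n + a) (n - k) * choose (r + k) (k - i)) * choose (i + r) i := by
        refine sum_congr rfl fun j _ => sum_congr rfl fun k _ => ?_
        rw [← sum_choose_mul_choose_mul_choose, mul_sum]
        exact sum_congr rfl fun i _ => by ring
    _ = ∑ i ∈ range (min m n + 1), (∑ j ∈ Icc i m, (-1) ^ j * choose (m + a) (m - j) *
          choose (r + j) (j - i)) * (∑ k ∈ Icc i n, (-1) ^ k * choose (n + a) (n - k) *
          choose (r + k) (k - i)) * choose (i + r) i := by
        rw [sum_range_sum_range_sum_range_min]
        simp_rw [sum_mul_sum, sum_mul]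
    _ = _ := by
        rw [mul_sum]
        refine sum_congr rfl fun i hi => ?_
        have hi : i ≤ m ∧ i ≤ n := by simpa [Nat.lt_succ_iff] using hi
        rw [sum_Icc_neg_one_pow_mul_choose_mul_choose a r hi.1,
          sum_Icc_neg_one_pow_mul_choose_mul_choose a r hi.2, pow_add]
        ring

end Ring

theorem Real.Gamma_add_nat_eq_mul_ascPochhammer {s : ℝ} (hs : ∀ k : ℕ, s ≠ -k) (n : ℕ) :
    Gamma (s + n) = Gamma s * (ascPochhammer ℝ n).eval s := by
  induction n with
  | zero => simp
  | succ n ih =>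
    have hsn : s + n ≠ 0 := fun h => hs n (by linarith)
    rw [Nat.cast_succ, ← add_assoc, Gamma_add_one hsn, ih, ascPochhammer_succ_right, eval_mul]
    simp only [eval_add, eval_X, eval_natCast]
    ring

theorem iteratedDeriv_rpow_mul_exp_neg (c : ℝ) (n : ℕ) {x : ℝ} (hx : 0 < x) :
    iteratedDeriv n (fun y => y ^ c * exp (-y)) x = ∑ i ∈ range (n + 1),
      n.choose i * ((descPochhammer ℝ i).eval c * x ^ (c - i)) * ((-1) ^ (n - i) * exp (-x)) := by
  rw [iteratedDeriv_fun_mul (contDiffAt_rpow_const (Or.inl hx.ne')) (by fun_prop)]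
  refine sum_congr rfl fun i _ => ?_
  rw [iteratedDeriv_eq_iterate, iter_deriv_rpow_const, iteratedDeriv_comp_neg,
    iteratedDeriv_eq_iterate, Real.iter_deriv_exp, smul_eq_mul]

theorem Lag_eq_sum (n : ℕ) (α : ℝ) {x : ℝ} (hx : 0 < x) :
    Lag n α x = ∑ k ∈ range (n + 1), (-1) ^ k * Ring.choose (n + α) (n - k) / k ! * x ^ k := by
  rw [Lag, iteratedDeriv_rpow_mul_exp_neg _ _ hx, mul_sum]
  conv_rhs => rw [← sum_range_reflect]
  refine sum_congr rfl fun i hi => ?_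
  have hi : i ≤ n := Nat.lt_succ_iff.1 (mem_range.1 hi)
  have hpow : x ^ (-α) * x ^ ((n : ℝ) + α - i) = x ^ (n - i) := by
    rw [← rpow_add hx, ← rpow_natCast, Nat.cast_sub hi]
    congr 1
    ring
  have hexp : exp x * exp (-x) = 1 := by rw [← exp_add, add_neg_cancel, exp_zero]
  have hfact : (n.choose i * i ! * (n - i)! : ℝ) = n ! := by
    exact_mod_cast Nat.choose_mul_factorial_mul_factorial hi
  rw [Nat.add_sub_cancel, Nat.sub_sub_self hi, Ring.descPochhammer_eval_eq_factorial_mul_choose]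
  field_simp
  rw [← hfact, ← hpow]
  linear_combination (x ^ (-α) * x ^ ((n : ℝ) + α - i) * n.choose i * i ! * (n - i)! *
    Ring.choose ((n : ℝ) + α) i) * hexp

theorem gbinom_eq_choose (x : ℝ) (k : ℕ) : gbinom x k = Ring.choose x k := by
  rw [gbinom, ← descPochhammer_eval_eq_prod_range, Ring.descPochhammer_eval_eq_factorial_mul_choose]
  field_simp
theorem integral_sum_mul_sum_mul_rpow_mul_exp_neg {μ : ℝ} (hμ : -1 < μ) (a b : ℕ → ℝ)
    (M N : ℕ) :
    ∫ s in Ioi (0 : ℝ), (∑ j ∈ range M, a j * s ^ j) * (∑ k ∈ range N, b k * s ^ k) *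
        s ^ μ * exp (-s)
      = ∑ j ∈ range M, ∑ k ∈ range N, a j * b k * Gamma (μ + j + k + 1) := by
  have hp (j k : ℕ) : -1 < μ + j + k := by
    linarith [j.cast_nonneg (α := ℝ), k.cast_nonneg (α := ℝ)]
  have hint (j k : ℕ) : IntegrableOn (fun s : ℝ => s ^ (μ + j + k) * exp (-s)) (Ioi 0) := by
    simpa using integrableOn_rpow_mul_exp_neg_rpow (hp j k) one_pos
  have hexpand : EqOn
      (fun s => (∑ j ∈ range M, a j * s ^ j) * (∑ k ∈ range N, b k * s ^ k) * s ^ μ * exp (-s))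
      (fun s => ∑ j ∈ range M, ∑ k ∈ range N, a j * b k * (s ^ (μ + j + k) * exp (-s)))
      (Ioi 0) := by
    intro s hs
    dsimp only
    rw [sum_mul_sum]
    simp only [sum_mul]
    refine sum_congr rfl fun j _ => sum_congr rfl fun k _ => ?_
    rw [rpow_add hs, rpow_add hs, rpow_natCast, rpow_natCast]
    ring
  rw [setIntegral_congr_fun measurableSet_Ioi hexpand,
    integral_finsetSum _ fun j _ => integrable_finsetSum _ fun k _ => (hint j k).const_mul _]
  refine sum_congr rfl fun j _ => ?_
  rw [integral_finsetSum _ fun k _ => (hint j k).const_mul _]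
  refine sum_congr rfl fun k _ => ?_
  rw [integral_const_mul]
  simpa using congrArg (a j * b k * ·) (integral_rpow_mul_exp_neg_rpow one_pos (hp j k))

theorem integral_Lag_mul_Lag_mul_rpow_mul_exp_neg (α : ℝ) {μ : ℝ} (hμ : -1 < μ) (m n : ℕ) :
    ∫ s in Ioi (0 : ℝ), Lag m α s * Lag n α s * s ^ μ * exp (-s)
      = Gamma (μ + 1) * ∑ j ∈ range (m + 1), ∑ k ∈ range (n + 1), (-1) ^ (j + k) *
          Ring.choose (m + α) (m - j) * Ring.choose (n + α) (n - k) *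
          ((j + k).choose j * Ring.choose (μ + j + k) (j + k)) := by
  have hLag : EqOn (fun s => Lag m α s * Lag n α s * s ^ μ * exp (-s))
      (fun s => (∑ j ∈ range (m + 1), (-1) ^ j * Ring.choose (m + α) (m - j) / j ! * s ^ j) *
        (∑ k ∈ range (n + 1), (-1) ^ k * Ring.choose (n + α) (n - k) / k ! * s ^ k) *
        s ^ μ * exp (-s)) (Ioi 0) :=
    fun s hs => by simp only [Lag_eq_sum _ _ hs]
  rw [setIntegral_congr_fun measurableSet_Ioi hLag, integral_sum_mul_sum_mul_rpow_mul_exp_neg hμ,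
    mul_sum]
  refine sum_congr rfl fun j _ => ?_
  rw [mul_sum]
  refine sum_congr rfl fun k _ => ?_
  have hΓ : Gamma (μ + j + k + 1)
      = Gamma (μ + 1) * ((j + k)! * Ring.choose (μ + j + k) (j + k)) := by
    have hs (l : ℕ) : μ + 1 ≠ -l := fun h => by linarith [l.cast_nonneg (α := ℝ)]
    rw [show μ + j + k + 1 = μ + 1 + ((j + k : ℕ) : ℝ) by push_cast; ring,
      Real.Gamma_add_nat_eq_mul_ascPochhammer hs, Ring.ascPochhammer_eval_eq_factorial_mul_choose]
    congr 4
    push_cast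
    ring
  have hfact : ((j + k)! : ℝ) = (j + k).choose j * j ! * k ! := by
    rw [Nat.choose_symm_add]
    exact_mod_cast (Nat.add_choose_mul_factorial_mul_factorial j k).symm
  rw [hΓ, hfact, pow_add]
  field_simp

theorem laguerre_product_integral_general (α μ : ℝ) (hμ : -1 < μ) (m n : ℕ) :
    ∫ s in Set.Ioi (0:ℝ), Lag m α s * Lag n α s * s ^ μ * Real.exp (-s)
      = (-1:ℝ)^(m + n) * Real.Gamma (μ + 1) *
          ∑ i ∈ Finset.range (min m n + 1),
            gbinom (μ - α) (m - i) * gbinom (μ - α) (n - i) * gbinom ((i : ℝ) + μ) i := by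
  simp only [gbinom_eq_choose]
  rw [integral_Lag_mul_Lag_mul_rpow_mul_exp_neg α hμ, Ring.sum_sum_neg_one_pow_mul_choose_eq]
  ring

theorem laguerre_product_integral (α μ : ℝ) (hα : -1 < α) (hμ : -1 < μ) (m n : ℕ) :
    ∫ s in Set.Ioi (0:ℝ), Lag m α s * Lag n α s * s ^ μ * Real.exp (-s)
      = (-1:ℝ)^(m + n) * Real.Gamma (μ + 1) *
          ∑ i ∈ Finset.range (min m n + 1),
            gbinom (μ - α) (m - i) * gbinom (μ - α) (n - i) * gbinom ((i : ℝ) + μ) i :=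
  laguerre_product_integral_general α μ hμ m n
end
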